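/- arXiv:1609.09051 — 2 statements merged into one kernel-verified Lean document; each statement's English description precedes it below -/
import Mathlib

section
/- Let T=(S ∪ U, E) be a transmission tree. The source case of T is a sampled case if and only if there exists a sampled case s ∈ S with v_{s,s}(T) = 0. Consequently, if T1 and T2 are transmission trees with the same sampled set S and v|_S(T1) = v|_S(T2), then the source of T1 is unsampled if and only if the source of T2 is unsampled, and if both sources are sampled then they are the same sampled case. -/
/-!
Every case is reachable from the source, so a case `s` lies on its own path `p_s` and
`v_{s,s} ≥ depth s`, which vanishes only at the source; conversely the only path ending at the
source is the trivial one, so `v_{source,source} = 0`. Thus the zero entries of the diagonal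
of `v|_S` single out the source exactly when it is sampled, and equal restricted vectors
single out the same case.
-/

/-- A directed path from `a` to `b` in the directed graph with edge relation `E`:
a nonempty list of vertices starting at `a`, ending at `b`, with consecutive
vertices joined by directed edges. -/
def IsDirPath {V : Type*} (E : V → V → Prop) (a b : V) (l : List V) : Prop :=
  l ≠ [] ∧ l.head? = some a ∧ l.getLast? = some b ∧ l.Chain' E

/-- The transmission-tree axioms for a directed graph with edge relation `E`:
every node has at most one infector (incoming edge), there are no directed cycles,
and the underlying undirected graph is connected. -/
def IsTransTree {V : Type*} (E : V → V → Prop) : Prop :=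
  (∀ a b c : V, E a c → E b c → a = b) ∧
  (∀ v : V, ¬ Relation.TransGen E v v) ∧
  (SimpleGraph.fromRel E).Connected

/-- The depth of node `n` (relative to the source `root`): the number of edges on
the directed path from `root` to `n`. -/
noncomputable def depth {V : Type*} (E : V → V → Prop) (root n : V) : ℕ :=
  sInf {k | ∃ l : List V, IsDirPath E root n l ∧ l.length = k + 1}

/-- `OnPath E root i m` : the node `m` lies on the directed path `p_i` from `root` to `i`. -/
def OnPath {V : Type*} (E : V → V → Prop) (root i m : V) : Prop :=
  ∃ l : List V, IsDirPath E root i l ∧ m ∈ l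

/-- `IsMRCI E root i j m` : `m` is the most recent common infector of `i` and `j`,
i.e. the node of greatest depth lying both on the path from `root` to `i` and on
the path from `root` to `j`. -/
def IsMRCI {V : Type*} (E : V → V → Prop) (root i j m : V) : Prop :=
  OnPath E root i m ∧ OnPath E root j m ∧
    ∀ m' : V, OnPath E root i m' → OnPath E root j m' →
      depth E root m' ≤ depth E root m

/-- `vEntry E root i j` : the entry `v_{i,j}(T)` of the tree vector, namely the depth of
the most recent common infector of `i` and `j` (the greatest depth of a node lying on
both the path from the source to `i` and the path from the source to `j`). -/
noncomputable def vEntry {V : Type*} (E : V → V → Prop) (root i j : V) : ℕ :=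
  sSup {k | ∃ m : V, OnPath E root i m ∧ OnPath E root j m ∧ depth E root m = k}

namespace IsDirPath

variable {V : Type*} {E : V → V → Prop} {a b c : V} {l : List V}

lemma singleton (E : V → V → Prop) (a : V) : IsDirPath E a a [a] :=
  ⟨List.cons_ne_nil a [], rfl, rfl, List.isChain_singleton a⟩

lemma snoc (h : IsDirPath E a b l) (hbc : E b c) : IsDirPath E a c (l ++ [c]) := by
  obtain ⟨hne, hhead, hlast, hchain⟩ := h
  refine ⟨by simp, by simpa [List.head?_append_of_ne_nil _ hne] using hhead, by simp, ?_⟩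
  exact hchain.append (List.isChain_singleton c) (by simp [hlast, hbc])

lemma eq_singleton_or_exists_last_edge (h : IsDirPath E a b l) :
    (l = [a] ∧ a = b) ∨ ∃ c l', l = l' ++ [b] ∧ IsDirPath E a c l' ∧ E c b := by
  obtain ⟨hne, hhead, hlast, hchain⟩ := h
  obtain ⟨l', x, rfl⟩ := (List.eq_nil_or_concat' l).resolve_left hne
  obtain rfl : x = b := by simpa using hlast
  rcases l'.eq_nil_or_concat' with rfl | ⟨l'', c, rfl⟩
  · obtain rfl : x = a := by simpa using hhead
    exact Or.inl ⟨rfl, rfl⟩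
  · refine Or.inr ⟨c, l'' ++ [c], rfl, ⟨by simp, ?_, by simp, hchain.left_of_append⟩, ?_⟩
    · simpa [List.head?_append_of_ne_nil _ (List.concat_ne_nil c l'')] using hhead
    · exact (List.isChain_append.1 hchain).2.2 c (by simp) x (by simp)

lemma eq_singleton_of_no_infector (hroot : ∀ x, ¬ E x a) (h : IsDirPath E a a l) : l = [a] := by
  rcases h.eq_singleton_or_exists_last_edge with ⟨rfl, -⟩ | ⟨c, -, -, -, hca⟩
  · rfl
  · exact absurd hca (hroot c)

end IsDirPath

section

variable {V : Type*} {E : V → V → Prop} {root n : V}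

lemma IsTransTree.exists_dirPath (h : IsTransTree E) (hroot : ∀ x, ¬ E x root) (n : V) :
    ∃ l, IsDirPath E root n l := by
  have hreach := (SimpleGraph.reachable_iff_reflTransGen n root).1 (h.2.2.preconnected n root)
  induction hreach using Relation.ReflTransGen.head_induction_on with
  | refl => exact ⟨_, IsDirPath.singleton E root⟩
  | @head n x hadj _ ih =>
    obtain ⟨l, hl⟩ := ih
    rcases hadj.2 with hnx | hxn
    · rcases hl.eq_singleton_or_exists_last_edge with ⟨-, rfl⟩ | ⟨c, l', -, hl', hcx⟩
      · exact absurd hnx (hroot n)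
      · exact ⟨l', h.1 c n x hcx hnx ▸ hl'⟩
    · exact ⟨_, hl.snoc hxn⟩

lemma depth_self (E : V → V → Prop) (a : V) : depth E a a = 0 :=
  Nat.sInf_eq_zero.2 (Or.inl ⟨[a], IsDirPath.singleton E a, rfl⟩)

lemma eq_of_depth_eq_zero (hn : ∃ l, IsDirPath E root n l) (h0 : depth E root n = 0) :
    root = n := by
  obtain ⟨l, hl⟩ := hn
  obtain ⟨l', hl', hlen⟩ : depth E root n ∈ {k | ∃ l, IsDirPath E root n l ∧ l.length = k + 1} :=
    Nat.sInf_mem ⟨l.length - 1, l, hl, (Nat.sub_add_cancel (List.length_pos_of_ne_nil hl.1)).symm⟩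
  rcases hl'.eq_singleton_or_exists_last_edge with ⟨-, h⟩ | ⟨c, l'', rfl, hl'', -⟩
  · exact h
  · simp [h0, hl''.1] at hlen

lemma onPath_self (hn : ∃ l, IsDirPath E root n l) : OnPath E root n n := by
  obtain ⟨l, hl⟩ := hn
  exact ⟨l, hl, List.mem_of_getLast? hl.2.2.1⟩

lemma le_vEntry [Finite V] {i j m : V} (hi : OnPath E root i m) (hj : OnPath E root j m) :
    depth E root m ≤ vEntry E root i j := by
  refine le_csSup ((Set.finite_range (depth E root)).subset ?_).bddAbove ⟨m, hi, hj, rfl⟩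
  rintro _ ⟨m', -, -, rfl⟩
  exact ⟨m', rfl⟩

lemma vEntry_source_left (hroot : ∀ x, ¬ E x root) (j : V) : vEntry E root root j = 0 := by
  refine Nat.le_zero.1 (csSup_le' ?_)
  rintro _ ⟨m, ⟨l, hl, hm⟩, -, rfl⟩
  rw [hl.eq_singleton_of_no_infector hroot, List.mem_singleton] at hm
  rw [hm, depth_self]

lemma vEntry_self_eq_zero_iff [Finite V] (h : IsTransTree E) (hroot : ∀ x, ¬ E x root) (s : V) :
    vEntry E root s s = 0 ↔ root = s := by
  refine ⟨fun h0 => ?_, fun hs => hs ▸ vEntry_source_left hroot root⟩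
  have hs := h.exists_dirPath hroot s
  exact eq_of_depth_eq_zero hs
    (Nat.le_zero.1 (h0 ▸ le_vEntry (onPath_self hs) (onPath_self hs)))

end

/-- In a transmission tree `T = (S ⊕ U, E)`, the source case is sampled
iff there is a sampled case `s` with `v_{s,s}(T) = 0`. Consequently, if two transmission
trees with the same sampled set `S` satisfy `v|_S(T1) = v|_S(T2)`, then the source of
`T1` is unsampled iff the source of `T2` is unsampled, and if both sources are sampled
then they are the same sampled case. -/
theorem stmt10 {S U1 U2 : Type*} [Fintype S] [Fintype U1] [Fintype U2]
    (E1 : S ⊕ U1 → S ⊕ U1 → Prop) (E2 : S ⊕ U2 → S ⊕ U2 → Prop)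
    (h1 : IsTransTree E1) (h2 : IsTransTree E2)
    (root1 : S ⊕ U1) (hroot1 : ∀ b, ¬ E1 b root1)
    (root2 : S ⊕ U2) (hroot2 : ∀ b, ¬ E2 b root2) :
    ((∃ s : S, root1 = Sum.inl s) ↔
      (∃ s : S, vEntry E1 root1 (Sum.inl s) (Sum.inl s) = 0)) ∧
    ((∀ s t : S, vEntry E1 root1 (Sum.inl s) (Sum.inl t)
        = vEntry E2 root2 (Sum.inl s) (Sum.inl t)) →
      (((∀ s : S, root1 ≠ Sum.inl s) ↔ (∀ s : S, root2 ≠ Sum.inl s)) ∧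
        (∀ s1 s2 : S, root1 = Sum.inl s1 → root2 = Sum.inl s2 → s1 = s2))) := by
  refine ⟨exists_congr fun s => (vEntry_self_eq_zero_iff h1 hroot1 _).symm, fun hv => ?_⟩
  have hsame : ∀ s : S, root1 = Sum.inl s ↔ root2 = Sum.inl s := fun s => by
    rw [← vEntry_self_eq_zero_iff h1 hroot1, ← vEntry_self_eq_zero_iff h2 hroot2, hv]
  exact ⟨forall_congr' fun s => not_congr (hsame s),
    fun s1 s2 hs1 hs2 => Sum.inl_injective (((hsame s1).1 hs1).symm.trans hs2)⟩
end

section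
/- Let T1=(S ∪ U1, E1) and T2=(S ∪ U2, E2) be transmission trees with the same sampled set S and v|_S(T1) = v|_S(T2). Then for every sampled node i ∈ S: i has the same depth δ in T1 and T2, and for every x with 0 ≤ x ≤ δ, the node at depth x on the path from the source to i in T1 is sampled if and only if the node at depth x on the path from the source to i in T2 is sampled, and when both are sampled they are the same sampled case. -/
/-!
When every node has at most one infector and the source has none, the directed path from the
source to a node is unique, so its `k`-th node has depth `k`. Hence `v_{a,i} ≤ depth a`, with
equality exactly when `a` lies on `p_i`; in particular `v_{i,i}` is the depth of `i`. For sampled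
`a` and `i` both sides are read off `v|_S`, so the two trees agree on the depths of sampled cases
and on which sampled cases lie on each `p_i`, and a node on `p_i` is determined by its depth.
-/

section DirPath

variable {V : Type*} {E : V → V → Prop}

theorem isDirPath_iff {a b : V} {l : List V} :
    IsDirPath E a b l ↔ ∃ hl : l ≠ [], l.head hl = a ∧ l.getLast hl = b ∧ l.IsChain E := by
  unfold IsDirPath
  constructor
  · rintro ⟨hl, ha, hb, hc⟩
    exact ⟨hl, by simpa [List.head?_eq_some_head hl] using ha,
      by simpa [List.getLast?_eq_some_getLast hl] using hb, hc⟩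
  · rintro ⟨hl, ha, hb, hc⟩
    exact ⟨hl, by simp [List.head?_eq_some_head hl, ha],
      by simp [List.getLast?_eq_some_getLast hl, hb], hc⟩

theorem IsDirPath.head_mem {a b : V} {l : List V} (h : IsDirPath E a b l) : a ∈ l := by
  obtain ⟨hl, rfl, -, -⟩ := isDirPath_iff.1 h
  exact List.head_mem hl

theorem IsDirPath.getLast_mem {a b : V} {l : List V} (h : IsDirPath E a b l) : b ∈ l := by
  obtain ⟨hl, -, rfl, -⟩ := isDirPath_iff.1 h
  exact List.getLast_mem hl

theorem IsDirPath.take {a b : V} {l : List V} (h : IsDirPath E a b l) {k : ℕ}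
    (hk : k < l.length) : IsDirPath E a l[k] (l.take (k + 1)) := by
  obtain ⟨hl, rfl, -, hc⟩ := isDirPath_iff.1 h
  have hl' : l.take (k + 1) ≠ [] := by simp [hl]
  exact isDirPath_iff.2
    ⟨hl', by simp [List.head_take], by simp [List.getLast_take, hk], hc.take _⟩

theorem IsDirPath.of_append_singleton {a b c : V} {l : List V} (h : IsDirPath E a c (l ++ [b])) :
    b = c ∧ (l = [] ∧ c = a ∨ ∃ d, IsDirPath E a d l ∧ E d c) := by
  obtain ⟨hne, ha, hc, hch⟩ := isDirPath_iff.1 h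
  simp only [List.getLast_append_of_ne_nil, List.getLast_singleton, ne_eq,
    List.cons_ne_self, not_false_eq_true] at hc
  subst hc
  refine ⟨rfl, ?_⟩
  rcases eq_or_ne l [] with rfl | hl
  · exact .inl ⟨rfl, by simpa using ha⟩
  · have hl_path : IsDirPath E a (l.getLast hl) l :=
      isDirPath_iff.2 ⟨hl, by simpa [hl] using ha, rfl, hch.left_of_append⟩
    refine .inr ⟨_, hl_path, ?_⟩
    simpa using hch.rel_getLast_head_of_append hl (List.cons_ne_nil b [])

theorem exists_isDirPath_of_reflTransGen {a b : V} (h : Relation.ReflTransGen E a b) :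
    ∃ l, IsDirPath E a b l := by
  obtain ⟨l, hl, hc, ha, hb⟩ := List.exists_isChain_ne_nil_of_relationReflTransGen h
  exact ⟨l, isDirPath_iff.2 ⟨hl, ha, hb, hc⟩⟩

end DirPath

section Tree

variable {V : Type*} {E : V → V → Prop} {root : V}

theorem IsDirPath.unique (hE : ∀ a b c : V, E a c → E b c → a = b) (hroot : ∀ b, ¬ E b root)
    {n : V} {l l' : List V} (h : IsDirPath E root n l) (h' : IsDirPath E root n l') : l = l' := by
  induction l using List.reverseRecOn generalizing n l' with
  | nil => exact absurd rfl h.1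
  | append_singleton l₀ x ih =>
    obtain ⟨l₀', y, rfl⟩ : ∃ l₀' y, l' = l₀' ++ [y] := by
      simpa using (List.eq_nil_or_concat l').resolve_left h'.1
    obtain ⟨rfl, h₀⟩ := h.of_append_singleton
    obtain ⟨rfl, h₀'⟩ := h'.of_append_singleton
    rcases h₀ with ⟨rfl, rfl⟩ | ⟨c, hc, hcx⟩ <;> rcases h₀' with ⟨rfl, hx⟩ | ⟨c', hc', hc'x⟩
    · rfl
    · exact absurd hc'x (hroot c')
    · exact absurd hcx (hx ▸ hroot c)
    · obtain rfl := hE c c' _ hcx hc'x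
      rw [ih hc hc']

theorem reflTransGen_of_connected (hE : ∀ a b c : V, E a c → E b c → a = b)
    (hroot : ∀ b, ¬ E b root) (hconn : (SimpleGraph.fromRel E).Connected) (n : V) :
    Relation.ReflTransGen E root n := by
  have hreach := hconn.preconnected root n
  rw [SimpleGraph.reachable_iff_reflTransGen] at hreach
  induction hreach with
  | refl => rfl
  | @tail b c _ hbc ih =>
    rcases hbc.2 with hbc | hcb
    · exact ih.tail hbc
    · -- `b` has the infector `c`, so it is not the source and its last step comes from `c`
      rcases ih.cases_tail with rfl | ⟨d, hd, hdb⟩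
      · exact absurd hcb (hroot c)
      · rwa [hE d c b hdb hcb] at hd

theorem exists_isDirPath (hE : ∀ a b c : V, E a c → E b c → a = b) (hroot : ∀ b, ¬ E b root)
    (hconn : (SimpleGraph.fromRel E).Connected) (n : V) : ∃ l, IsDirPath E root n l :=
  exists_isDirPath_of_reflTransGen (reflTransGen_of_connected hE hroot hconn n)

theorem depth_eq_length_sub_one (hE : ∀ a b c : V, E a c → E b c → a = b)
    (hroot : ∀ b, ¬ E b root) {n : V} {l : List V} (h : IsDirPath E root n l) :
    depth E root n = l.length - 1 := by
  have hl := List.length_pos_iff.2 h.1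
  refine le_antisymm (Nat.sInf_le ⟨l, h, by omega⟩) (le_csInf ⟨l.length - 1, l, h, by omega⟩ ?_)
  rintro k ⟨l', h', hk⟩
  rw [h.unique hE hroot h', hk, Nat.add_sub_cancel]

theorem IsDirPath.depth_getElem (hE : ∀ a b c : V, E a c → E b c → a = b)
    (hroot : ∀ b, ¬ E b root) {i : V} {l : List V} (h : IsDirPath E root i l) {k : ℕ}
    (hk : k < l.length) : depth E root l[k] = k := by
  rw [depth_eq_length_sub_one hE hroot (h.take hk), List.length_take]
  omega

theorem OnPath.depth_le (hE : ∀ a b c : V, E a c → E b c → a = b) (hroot : ∀ b, ¬ E b root)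
    {i m : V} (hm : OnPath E root i m) : depth E root m ≤ depth E root i := by
  obtain ⟨l, hl, hml⟩ := hm
  obtain ⟨k, hk, rfl⟩ := List.getElem_of_mem hml
  rw [hl.depth_getElem hE hroot hk, depth_eq_length_sub_one hE hroot hl]
  omega

theorem OnPath.eq_of_depth_eq (hE : ∀ a b c : V, E a c → E b c → a = b)
    (hroot : ∀ b, ¬ E b root) {i m m' : V} (hm : OnPath E root i m) (hm' : OnPath E root i m')
    (hd : depth E root m = depth E root m') : m = m' := by
  obtain ⟨l, hl, hml⟩ := hm
  obtain ⟨l', hl', hml'⟩ := hm'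
  obtain rfl := hl.unique hE hroot hl'
  obtain ⟨k, hk, rfl⟩ := List.getElem_of_mem hml
  obtain ⟨k', hk', rfl⟩ := List.getElem_of_mem hml'
  rw [hl.depth_getElem hE hroot hk, hl.depth_getElem hE hroot hk'] at hd
  simp only [hd]

theorem onPath_self_s12 (hE : ∀ a b c : V, E a c → E b c → a = b) (hroot : ∀ b, ¬ E b root)
    (hconn : (SimpleGraph.fromRel E).Connected) (n : V) : OnPath E root n n :=
  let ⟨l, hl⟩ := exists_isDirPath hE hroot hconn n
  ⟨l, hl, hl.getLast_mem⟩

theorem onPath_source (hE : ∀ a b c : V, E a c → E b c → a = b) (hroot : ∀ b, ¬ E b root)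
    (hconn : (SimpleGraph.fromRel E).Connected) (n : V) : OnPath E root n root :=
  let ⟨l, hl⟩ := exists_isDirPath hE hroot hconn n
  ⟨l, hl, hl.head_mem⟩

theorem vEntry_eq_depth_iff (hE : ∀ a b c : V, E a c → E b c → a = b)
    (hroot : ∀ b, ¬ E b root) (hconn : (SimpleGraph.fromRel E).Connected) {a i : V} :
    vEntry E root a i = depth E root a ↔ OnPath E root i a := by
  set K := {k | ∃ m : V, OnPath E root a m ∧ OnPath E root i m ∧ depth E root m = k}
  have hbound : ∀ k ∈ K, k ≤ depth E root a := by
    rintro k ⟨m, hm, -, rfl⟩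
    exact hm.depth_le hE hroot
  constructor
  · intro hv
    have hsource_mem : depth E root root ∈ K :=
      ⟨root, onPath_source hE hroot hconn a, onPath_source hE hroot hconn i, rfl⟩
    obtain ⟨m, hma, hmi, hm⟩ := Nat.sSup_mem ⟨_, hsource_mem⟩ ⟨_, hbound⟩
    obtain rfl : m = a := hma.eq_of_depth_eq hE hroot (onPath_self_s12 hE hroot hconn a) (hm.trans hv)
    exact hmi
  · intro ha
    have ha_mem : depth E root a ∈ K := ⟨a, onPath_self_s12 hE hroot hconn a, ha, rfl⟩
    exact le_antisymm (csSup_le ⟨_, ha_mem⟩ hbound) (le_csSup ⟨_, hbound⟩ ha_mem)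

theorem vEntry_self (hE : ∀ a b c : V, E a c → E b c → a = b) (hroot : ∀ b, ¬ E b root)
    (hconn : (SimpleGraph.fromRel E).Connected) (i : V) : vEntry E root i i = depth E root i :=
  (vEntry_eq_depth_iff hE hroot hconn).2 (onPath_self_s12 hE hroot hconn i)

end Tree

theorem stmt12_general {S U1 U2 : Type*}
    (E1 : S ⊕ U1 → S ⊕ U1 → Prop) (E2 : S ⊕ U2 → S ⊕ U2 → Prop)
    (h1 : IsTransTree E1) (h2 : IsTransTree E2)
    (root1 : S ⊕ U1) (hroot1 : ∀ b, ¬ E1 b root1)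
    (root2 : S ⊕ U2) (hroot2 : ∀ b, ¬ E2 b root2)
    (hv : ∀ s t : S, vEntry E1 root1 (Sum.inl s) (Sum.inl t)
      = vEntry E2 root2 (Sum.inl s) (Sum.inl t)) :
    ∀ i : S,
      depth E1 root1 (Sum.inl i) = depth E2 root2 (Sum.inl i) ∧
      ∀ x : ℕ, x ≤ depth E1 root1 (Sum.inl i) →
        ((∃ a : S, OnPath E1 root1 (Sum.inl i) (Sum.inl a) ∧
            depth E1 root1 (Sum.inl a) = x) ↔
          (∃ b : S, OnPath E2 root2 (Sum.inl i) (Sum.inl b) ∧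
            depth E2 root2 (Sum.inl b) = x)) ∧
        (∀ a b : S,
          OnPath E1 root1 (Sum.inl i) (Sum.inl a) → depth E1 root1 (Sum.inl a) = x →
          OnPath E2 root2 (Sum.inl i) (Sum.inl b) → depth E2 root2 (Sum.inl b) = x →
          a = b) := by
  obtain ⟨hE1, -, hconn1⟩ := h1
  obtain ⟨hE2, -, hconn2⟩ := h2
  have hdepth (s : S) : depth E1 root1 (.inl s) = depth E2 root2 (.inl s) := by
    rw [← vEntry_self hE1 hroot1 hconn1, ← vEntry_self hE2 hroot2 hconn2, hv]
  have honPath (i a : S) :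
      OnPath E1 root1 (.inl i) (.inl a) ↔ OnPath E2 root2 (.inl i) (.inl a) := by
    rw [← vEntry_eq_depth_iff hE1 hroot1 hconn1, ← vEntry_eq_depth_iff hE2 hroot2 hconn2, hv,
      hdepth]
  refine fun i => ⟨hdepth i, fun x _ => ⟨by simp only [honPath, hdepth], ?_⟩⟩
  intro a b ha hax hb hbx
  exact Sum.inl_injective <|
    ((honPath i a).1 ha).eq_of_depth_eq hE2 hroot2 hb (by rw [← hdepth, hax, hbx])

/-- Let `T1 = (S ⊕ U1, E1)` and `T2 = (S ⊕ U2, E2)` be transmission trees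
with the same sampled set `S` and `v|_S(T1) = v|_S(T2)`. Then every sampled node `i` has
the same depth `δ` in both trees, and for every `0 ≤ x ≤ δ`, the node at depth `x` on the
path from the source to `i` in `T1` is sampled iff the node at depth `x` on the path from
the source to `i` in `T2` is sampled, and when both are sampled they are the same case. -/
theorem stmt12 {S U1 U2 : Type*} [Fintype S] [Fintype U1] [Fintype U2]
    (E1 : S ⊕ U1 → S ⊕ U1 → Prop) (E2 : S ⊕ U2 → S ⊕ U2 → Prop)
    (h1 : IsTransTree E1) (h2 : IsTransTree E2)
    (root1 : S ⊕ U1) (hroot1 : ∀ b, ¬ E1 b root1)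
    (root2 : S ⊕ U2) (hroot2 : ∀ b, ¬ E2 b root2)
    (hv : ∀ s t : S, vEntry E1 root1 (Sum.inl s) (Sum.inl t)
      = vEntry E2 root2 (Sum.inl s) (Sum.inl t)) :
    ∀ i : S,
      depth E1 root1 (Sum.inl i) = depth E2 root2 (Sum.inl i) ∧
      ∀ x : ℕ, x ≤ depth E1 root1 (Sum.inl i) →
        ((∃ a : S, OnPath E1 root1 (Sum.inl i) (Sum.inl a) ∧
            depth E1 root1 (Sum.inl a) = x) ↔
          (∃ b : S, OnPath E2 root2 (Sum.inl i) (Sum.inl b) ∧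
            depth E2 root2 (Sum.inl b) = x)) ∧
        (∀ a b : S,
          OnPath E1 root1 (Sum.inl i) (Sum.inl a) → depth E1 root1 (Sum.inl a) = x →
          OnPath E2 root2 (Sum.inl i) (Sum.inl b) → depth E2 root2 (Sum.inl b) = x →
          a = b) :=
  stmt12_general E1 E2 h1 h2 root1 hroot1 root2 hroot2 hv
end
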